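/- arXiv:2510.20737 — 8 statements merged into one kernel-verified Lean document; each statement's English description precedes it below -/
import Mathlib

section
/- Every bipartite graph whose biadjacency matrix (under some ordering of rows and columns) avoids the pattern [[0,1],[1,1]], and which contains no complete bipartite subgraph K_{k,k}, is (k-1)-degenerate. -/
/-!
Let `j*` be the last column in the vertex set and `i*` the last row adjacent to `j*`. For any
row neighbour `i` of `j*` and column neighbour `j` of `i*` we have `i ≤ i*`, `j ≤ j*` and
`M i j* = M i* j = M i* j* = 1`, so avoiding `[[0,1],[1,1]]` forces `M i j = 1`. Hence the
neighbourhoods of `j*` and `i*` span a complete bipartite subgraph, which contains `K_{k,k}` as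
soon as every vertex has degree at least `k`.
-/

/-- The bipartite graph (on vertex set `α ⊕ β`) determined by an adjacency
relation `A : α → β → Prop` across the two parts. -/
def bipGraph {α β : Type*} (A : α → β → Prop) : SimpleGraph (α ⊕ β) where
  Adj x y := match x, y with
    | Sum.inl i, Sum.inr j => A i j
    | Sum.inr j, Sum.inl i => A i j
    | _, _ => False
  symm := ⟨by rintro (i | i) (j | j) h <;> exact h⟩
  loopless := ⟨by rintro (i | i) h <;> exact h⟩

open Finset

/-- The biadjacency matrix `M` avoids the pattern `[[0,1],[1,1]]`. -/
def AvoidsCornerZero {α β : Type*} [LinearOrder α] [LinearOrder β] (M : α → β → Bool) : Prop :=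
  ∀ i₁ i₂ : α, ∀ j₁ j₂ : β, i₁ < i₂ → j₁ < j₂ →
    ¬(M i₁ j₁ = false ∧ M i₁ j₂ = true ∧ M i₂ j₁ = true ∧ M i₂ j₂ = true)

section AvoidsCornerZero

variable {α β : Type*} [LinearOrder α] [LinearOrder β] {M : α → β → Bool}

theorem AvoidsCornerZero.eq_true {i i' : α} {j j' : β} (hM : AvoidsCornerZero M)
    (hi : i ≤ i') (hj : j ≤ j') (hij' : M i j' = true) (hi'j : M i' j = true)
    (hi'j' : M i' j' = true) : M i j = true := by
  rcases hi.eq_or_lt with rfl | hi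
  · exact hi'j
  rcases hj.eq_or_lt with rfl | hj
  · exact hij'
  by_contra hij
  exact hM i i' j j' hi hj ⟨Bool.not_eq_true _ ▸ hij, hij', hi'j, hi'j'⟩

theorem AvoidsCornerZero.exists_allOnes_of_le_degrees {k : ℕ} (hM : AvoidsCornerZero M)
    (hk : 0 < k) {S : Finset α} {T : Finset β} (hT : T.Nonempty)
    (hrow : ∀ i ∈ S, k ≤ #{j ∈ T | M i j}) (hcol : ∀ j ∈ T, k ≤ #{i ∈ S | M i j}) :
    ∃ R C, #R = k ∧ #C = k ∧ ∀ i ∈ R, ∀ j ∈ C, M i j = true := by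
  set j' := T.max' hT
  set R := {i ∈ S | M i j'}
  have hR : k ≤ #R := hcol j' (T.max'_mem hT)
  have hRne : R.Nonempty := card_pos.mp (hk.trans_le hR)
  set i' := R.max' hRne
  have hi' : i' ∈ S ∧ M i' j' := mem_filter.mp (R.max'_mem hRne)
  set C := {j ∈ T | M i' j}
  have hC : k ≤ #C := hrow i' hi'.1
  obtain ⟨R', hR'R, hR'⟩ := exists_subset_card_eq hR
  obtain ⟨C', hC'C, hC'⟩ := exists_subset_card_eq hC
  refine ⟨R', C', hR', hC', fun i hi j hj => ?_⟩
  have hiR := hR'R hi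
  have hjC := hC'C hj
  exact hM.eq_true (R.le_max' i hiR) (T.le_max' j (mem_filter.mp hjC).1)
    (mem_filter.mp hiR).2 (mem_filter.mp hjC).2 hi'.2

end AvoidsCornerZero

section bipGraph

variable {α β : Type*} {A : α → β → Prop} [DecidableRel A] (s : Finset (α ⊕ β))

theorem ncard_bipGraph_inl_neighbors (i : α) :
    {w | w ∈ s ∧ (bipGraph A).Adj (.inl i) w}.ncard = #{j ∈ s.toRight | A i j} := by
  have : {w | w ∈ s ∧ (bipGraph A).Adj (.inl i) w} = Sum.inr '' ↑{j ∈ s.toRight | A i j} := by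
    ext (w | w) <;> simp [bipGraph]
  rw [this, Set.ncard_image_of_injective _ Sum.inr_injective, Set.ncard_coe_finset]

theorem ncard_bipGraph_inr_neighbors (j : β) :
    {w | w ∈ s ∧ (bipGraph A).Adj (.inr j) w}.ncard = #{i ∈ s.toLeft | A i j} := by
  have : {w | w ∈ s ∧ (bipGraph A).Adj (.inr j) w} = Sum.inl '' ↑{i ∈ s.toLeft | A i j} := by
    ext (w | w) <;> simp [bipGraph]
  rw [this, Set.ncard_image_of_injective _ Sum.inl_injective, Set.ncard_coe_finset]

end bipGraph

/-- Every bipartite graph whose biadjacency matrix (under the given ordering of rows and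
columns) avoids the pattern `[[0,1],[1,1]]` and which contains no `K_{k,k}` is
`(k-1)`-degenerate: every nonempty induced subgraph has a vertex of degree at most `k-1`. -/
theorem stmt_2 {m n k : ℕ} (M : Fin m → Fin n → Bool)
    (hpat : ∀ i₁ i₂ : Fin m, ∀ j₁ j₂ : Fin n, i₁ < i₂ → j₁ < j₂ →
      ¬(M i₁ j₁ = false ∧ M i₁ j₂ = true ∧ M i₂ j₁ = true ∧ M i₂ j₂ = true))
    (hK : ¬ ∃ (R : Finset (Fin m)) (C : Finset (Fin n)), R.card = k ∧ C.card = k ∧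
      ∀ i ∈ R, ∀ j ∈ C, M i j = true) :
    ∀ s : Finset (Fin m ⊕ Fin n), s.Nonempty →
      ∃ v ∈ s, {w | w ∈ s ∧ (bipGraph (fun i j => M i j = true)).Adj v w}.ncard ≤ k - 1 := by
  intro s hs
  by_contra! hdeg
  rcases k.eq_zero_or_pos with rfl | hk
  · exact hK ⟨∅, ∅, rfl, rfl, by simp⟩
  have hrow : ∀ i ∈ s.toLeft, k ≤ #{j ∈ s.toRight | M i j} := fun i hi => by
    have := hdeg _ (mem_toLeft.mp hi)
    rw [ncard_bipGraph_inl_neighbors] at this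
    omega
  have hcol : ∀ j ∈ s.toRight, k ≤ #{i ∈ s.toLeft | M i j} := fun j hj => by
    have := hdeg _ (mem_toRight.mp hj)
    rw [ncard_bipGraph_inr_neighbors] at this
    omega
  have hT : s.toRight.Nonempty := by
    obtain ⟨i | j, hv⟩ := hs
    · obtain ⟨j, hj⟩ := card_pos.mp (hk.trans_le (hrow i (mem_toLeft.mpr hv)))
      exact ⟨j, (mem_filter.mp hj).1⟩
    · exact ⟨j, mem_toRight.mpr hv⟩
  exact hK (AvoidsCornerZero.exists_allOnes_of_le_degrees hpat hk hT hrow hcol)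
end

section
/- If a bipartite graph G = (U ∪ V, E) with |U| = m and |V| = n has a biadjacency matrix avoiding the pattern [[0,1],[1,1]] and contains no K_{k,k}, then |E| ≤ (m+n)(k-1). -/
/-!
For a one-entry `(i, j)` count the ones of column `j` strictly above it. Call the entry light if
fewer than `k - 1` ones lie above it, heavy otherwise. Within a column this count strictly increases
down the ones, so each column has at most `k - 1` light entries. In a row, `k` heavy entries give a
`K_{k,k}`: take the `k - 1` rows with a one above the rightmost of them, and the forbidden pattern
fills these rows with ones at all of the `k` columns. So each row has at most `k - 1` heavy entries.
-/

open Finset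

theorem Finset.card_filter_card_filter_lt_lt_le {α : Type*} [LinearOrder α] (s : Finset α)
    (t : ℕ) : #{x ∈ s | #{y ∈ s | y < x} < t} ≤ t := by
  have hmono : StrictMonoOn (fun x => #{y ∈ s | y < x}) s := by
    intro x hx x' _ hlt
    refine card_lt_card ⟨monotone_filter_right s fun _ _ => (·.trans hlt), fun hsub => ?_⟩
    exact (mem_filter.mp (hsub (mem_filter.mpr ⟨hx, hlt⟩))).2.false
  calc #{x ∈ s | #{y ∈ s | y < x} < t}
      ≤ #(range t) := card_le_card_of_injOn _
        (fun x hx => mem_range.mpr (mem_filter.mp hx).2)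
        (hmono.injOn.mono (filter_subset _ _))
    _ = t := card_range t

section Biadjacency

variable {ι κ : Type*} [LinearOrder ι] [LinearOrder κ]

def AvoidsPattern (M : ι → κ → Bool) : Prop :=
  ∀ i₁ i₂ : ι, ∀ j₁ j₂ : κ, i₁ < i₂ → j₁ < j₂ →
    ¬(M i₁ j₁ = false ∧ M i₁ j₂ = true ∧ M i₂ j₁ = true ∧ M i₂ j₂ = true)

theorem AvoidsPattern.eq_true_of_le {M : ι → κ → Bool} (hM : AvoidsPattern M) {r i : ι}
    {j j' : κ} (hri : r < i) (hjj' : j ≤ j') (hrj' : M r j' = true) (hij : M i j = true)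
    (hij' : M i j' = true) : M r j = true := by
  rcases hjj'.eq_or_lt with rfl | hlt
  · exact hrj'
  · by_contra h
    exact hM r i j j' hri hlt ⟨Bool.eq_false_iff.mpr h, hrj', hij, hij'⟩

def HasAllOnesSquare (M : ι → κ → Bool) (k : ℕ) : Prop :=
  ∃ (R : Finset ι) (C : Finset κ), R.card = k ∧ C.card = k ∧ ∀ i ∈ R, ∀ j ∈ C, M i j = true

variable [Fintype ι]

def colOnes (M : ι → κ → Bool) (j : κ) : Finset ι := {i | M i j = true}

def onesAbove (M : ι → κ → Bool) (i : ι) (j : κ) : Finset ι := {i' ∈ colOnes M j | i' < i}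

theorem hasAllOnesSquare_of_row {M : ι → κ → Bool} (hM : AvoidsPattern M) {k : ℕ} {i : ι}
    {C : Finset κ} (hC : #C = k + 1) (hrow : ∀ j ∈ C, M i j = true)
    (habove : ∀ j ∈ C, k ≤ #(onesAbove M i j)) : HasAllOnesSquare M (k + 1) := by
  have hCne : C.Nonempty := card_pos.mp (by omega)
  set jmax := C.max' hCne
  obtain ⟨R, hR, hRcard⟩ := exists_subset_card_eq (habove jmax (C.max'_mem hCne))
  have hRi : ∀ r ∈ R, r < i ∧ M r jmax = true := fun r hr => by
    simpa [onesAbove, colOnes, and_comm] using hR hr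
  refine ⟨insert i R, C, ?_, hC, ?_⟩
  · rw [card_insert_of_notMem fun hi => (hRi i hi).1.false, hRcard]
  · intro r hr j hj
    rcases mem_insert.mp hr with rfl | hr
    · exact hrow j hj
    · exact hM.eq_true_of_le (hRi r hr).1 (C.le_max' j hj) (hRi r hr).2 (hrow j hj)
        (hrow jmax (C.max'_mem hCne))

variable [Fintype κ]

theorem card_row_ones_many_above_le {M : ι → κ → Bool} (hM : AvoidsPattern M) {k : ℕ}
    (hK : ¬ HasAllOnesSquare M (k + 1)) (i : ι) :
    #{j | M i j = true ∧ k ≤ #(onesAbove M i j)} ≤ k := by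
  by_contra! h
  obtain ⟨C, hC, hCcard⟩ := exists_subset_card_eq h
  exact hK (hasAllOnesSquare_of_row (i := i) hM hCcard
    (fun j hj => (mem_filter.mp (hC hj)).2.1) (fun j hj => (mem_filter.mp (hC hj)).2.2))

theorem card_ones_few_above_le (M : ι → κ → Bool) (k : ℕ) :
    #{p : ι × κ | M p.1 p.2 = true ∧ #(onesAbove M p.1 p.2) < k} ≤ Fintype.card κ * k := by
  rw [mul_comm]
  refine card_le_mul_card_image_of_maps_to (f := Prod.snd) (fun _ _ => mem_univ _) k
    fun j _ => (card_le_card_of_injOn Prod.fst ?_ ?_).trans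
      ((colOnes M j).card_filter_card_filter_lt_lt_le k)
  · intro p hp
    simp only [coe_filter, mem_filter, mem_univ, true_and, Set.mem_ofPred_eq] at hp
    obtain ⟨⟨hM, hk⟩, rfl⟩ := hp
    exact mem_filter.mpr ⟨mem_filter.mpr ⟨mem_univ _, hM⟩, hk⟩
  · intro p hp q hq hpq
    simp only [coe_filter, mem_filter, mem_univ, true_and, Set.mem_ofPred_eq] at hp hq
    exact Prod.ext hpq (hp.2.trans hq.2.symm)

theorem card_ones_many_above_le {M : ι → κ → Bool} (hM : AvoidsPattern M) {k : ℕ}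
    (hK : ¬ HasAllOnesSquare M (k + 1)) :
    #{p : ι × κ | M p.1 p.2 = true ∧ k ≤ #(onesAbove M p.1 p.2)} ≤ Fintype.card ι * k := by
  rw [mul_comm]
  refine card_le_mul_card_image_of_maps_to (f := Prod.fst) (fun _ _ => mem_univ _) k
    fun i _ => (card_le_card_of_injOn Prod.snd ?_ ?_).trans (card_row_ones_many_above_le hM hK i)
  · intro p hp
    simp only [coe_filter, mem_filter, mem_univ, true_and, Set.mem_ofPred_eq] at hp
    obtain ⟨hp, rfl⟩ := hp
    simpa using hp
  · intro p hp q hq hpq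
    simp only [coe_filter, mem_filter, mem_univ, true_and, Set.mem_ofPred_eq] at hp hq
    exact Prod.ext (hp.2.trans hq.2.symm) hpq

theorem card_ones_le {M : ι → κ → Bool} (hM : AvoidsPattern M) {k : ℕ}
    (hK : ¬ HasAllOnesSquare M (k + 1)) :
    #{p : ι × κ | M p.1 p.2 = true} ≤ (Fintype.card ι + Fintype.card κ) * k := by
  rw [add_comm (Fintype.card ι), add_mul,
    ← card_filter_add_card_filter_not (fun p : ι × κ => #(onesAbove M p.1 p.2) < k),
    filter_filter, filter_filter]
  simp only [not_lt]
  exact add_le_add (card_ones_few_above_le M k) (card_ones_many_above_le hM hK)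

end Biadjacency

/-- If a bipartite graph with parts of sizes `m` and `n` has a biadjacency matrix
avoiding the pattern `[[0,1],[1,1]]` and contains no `K_{k,k}`, then it has at most
`(m+n)(k-1)` edges. -/
theorem stmt_3 {m n k : ℕ} (M : Fin m → Fin n → Bool)
    (hpat : ∀ i₁ i₂ : Fin m, ∀ j₁ j₂ : Fin n, i₁ < i₂ → j₁ < j₂ →
      ¬(M i₁ j₁ = false ∧ M i₁ j₂ = true ∧ M i₂ j₁ = true ∧ M i₂ j₂ = true))
    (hK : ¬ ∃ (R : Finset (Fin m)) (C : Finset (Fin n)), R.card = k ∧ C.card = k ∧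
      ∀ i ∈ R, ∀ j ∈ C, M i j = true) :
    (Finset.univ.filter (fun p : Fin m × Fin n => M p.1 p.2 = true)).card
      ≤ (m + n) * (k - 1) := by
  obtain _ | k := k
  · exact absurd ⟨∅, ∅, rfl, rfl, by simp⟩ hK
  simpa using card_ones_le hpat hK
end

section
/- Consider a bipartite intersection graph G of a set S of horizontal segments and a set R of vertical upward rays in the plane (u ~ v iff the segment of u meets the ray of v). If G contains no K_{k,k}, then G is 2(k-1)-degenerate. -/
open Finset

lemma Icc_prod_singleton_inter_singleton_prod_Ici_nonempty_iff (a b y x r : ℝ) :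
    ((Set.Icc a b ×ˢ {y}) ∩ ({x} ×ˢ Set.Ici r)).Nonempty ↔ a ≤ x ∧ x ≤ b ∧ r ≤ y := by
  simp [Set.prod_inter_prod, Set.prod_nonempty_iff, and_assoc]

lemma ncard_bipGraph_adj_inl {α β : Type*} (A : α → β → Prop) [DecidableRel A]
    (s : Finset (α ⊕ β)) (u : α) :
    {w | w ∈ s ∧ (bipGraph A).Adj (.inl u) w}.ncard = #{v ∈ s.toRight | A u v} := by
  have : {w | w ∈ s ∧ (bipGraph A).Adj (.inl u) w} =
      (({v ∈ s.toRight | A u v}.map .inr : Finset (α ⊕ β)) : Set (α ⊕ β)) := by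
    ext (_ | v) <;> simp [bipGraph]
  rw [this, Set.ncard_coe_finset, card_map]

lemma ncard_bipGraph_adj_inr {α β : Type*} (A : α → β → Prop) [DecidableRel A]
    (s : Finset (α ⊕ β)) (v : β) :
    {w | w ∈ s ∧ (bipGraph A).Adj (.inr v) w}.ncard = #{u ∈ s.toLeft | A u v} := by
  have : {w | w ∈ s ∧ (bipGraph A).Adj (.inr v) w} =
      (({u ∈ s.toLeft | A u v}.map .inl : Finset (α ⊕ β)) : Set (α ⊕ β)) := by
    ext (u | _) <;> simp [bipGraph]
  rw [this, Set.ncard_coe_finset, card_map]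

lemma Finset.le_card_or_le_card_of_subset_union {ι : Type*} [DecidableEq ι] {s t₁ t₂ : Finset ι}
    {k : ℕ} (h : s ⊆ t₁ ∪ t₂) (hs : 2 * k - 1 ≤ #s) : k ≤ #t₁ ∨ k ≤ #t₂ := by
  have := (card_le_card h).trans (card_union_le t₁ t₂)
  omega

def HasBiclique {α β : Type*} (P : α → β → Prop) (k : ℕ) : Prop :=
  ∃ (U : Finset α) (V : Finset β), #U = k ∧ #V = k ∧ ∀ u ∈ U, ∀ v ∈ V, P u v

section

variable {α β : Type*} {k : ℕ}

lemma hasBiclique_of_nested {γ : Type*} [LinearOrder γ] {P : α → β → Prop} (D : Finset α)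
    (N : α → Finset β) (f : α → γ) (hD : k ≤ #D) (hN : ∀ u ∈ D, k ≤ #(N u))
    (hnested : ∀ u ∈ D, ∀ u' ∈ D, f u' ≤ f u → ∀ v ∈ N u', P u v) : HasBiclique P k := by
  obtain ⟨U, hUD, hU⟩ := exists_subset_card_eq hD
  rcases U.eq_empty_or_nonempty with rfl | hUne
  · exact ⟨∅, ∅, hU, hU, by simp⟩
  obtain ⟨u₀, hu₀, hmin⟩ := U.exists_min_image f hUne
  obtain ⟨V, hVN, hV⟩ := exists_subset_card_eq (hN u₀ (hUD hu₀))
  exact ⟨U, V, hU, hV, fun u hu v hv => hnested u (hUD hu) u₀ (hUD hu₀) (hmin u hu) v (hVN hv)⟩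

variable {sa sb sy : α → ℝ} {rx ry : β → ℝ} {A : α → β → Prop} [DecidableRel A]

lemma hasBiclique_of_stabbed (hA : ∀ u v, A u v ↔ sa u ≤ rx v ∧ rx v ≤ sb u ∧ ry v ≤ sy u)
    (R : Finset β) (D : Finset α) (x₀ y₀ : ℝ) (hR : ∀ v ∈ R, ry v ≤ y₀)
    (hD : ∀ u ∈ D, sa u ≤ x₀ ∧ x₀ ≤ sb u ∧ y₀ ≤ sy u) (hDcard : 2 * k - 1 ≤ #D)
    (hdeg : ∀ u ∈ D, 2 * k - 1 ≤ #{v ∈ R | A u v}) : HasBiclique A k := by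
  classical
  set right : α → Finset β := fun u => {v ∈ R | A u v ∧ x₀ ≤ rx v}
  set left : α → Finset β := fun u => {v ∈ R | A u v ∧ rx v ≤ x₀}
  have hsplit (u) (hu : u ∈ D) : k ≤ #(right u) ∨ k ≤ #(left u) := by
    refine le_card_or_le_card_of_subset_union (fun v hv => ?_) (hdeg u hu)
    rcases le_total x₀ (rx v) with h | h <;> simp_all [right, left]
  have hDsplit : D ⊆ {u ∈ D | k ≤ #(right u)} ∪ {u ∈ D | k ≤ #(left u)} := fun u hu => by
    simpa [hu] using hsplit u hu
  rcases le_card_or_le_card_of_subset_union hDsplit hDcard with hr | hl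
  · refine hasBiclique_of_nested _ right sb hr (fun u hu => (mem_filter.1 hu).2) ?_
    intro u hu u' _ hb v hv
    obtain ⟨hvR, hu'v, hxv⟩ := by simpa [right] using hv
    obtain ⟨hsa, -, hy⟩ := hD u (mem_filter.1 hu).1
    exact (hA u v).2 ⟨hsa.trans hxv, ((hA u' v).1 hu'v).2.1.trans hb, (hR v hvR).trans hy⟩
  · refine hasBiclique_of_nested _ left (fun u => OrderDual.toDual (sa u)) hl
      (fun u hu => (mem_filter.1 hu).2) ?_
    intro u hu u' _ ha v hv
    obtain ⟨hvR, hu'v, hxv⟩ := by simpa [left] using hv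
    obtain ⟨-, hsb, hy⟩ := hD u (mem_filter.1 hu).1
    exact (hA u v).2 ⟨OrderDual.toDual_le_toDual.1 ha |>.trans ((hA u' v).1 hu'v).1,
      hxv.trans hsb, (hR v hvR).trans hy⟩

lemma hasBiclique_of_le_degree (hA : ∀ u v, A u v ↔ sa u ≤ rx v ∧ rx v ≤ sb u ∧ ry v ≤ sy u)
    (S : Finset α) (R : Finset β) (hR : R.Nonempty)
    (hSdeg : ∀ u ∈ S, 2 * k - 1 ≤ #{v ∈ R | A u v})
    (hRdeg : ∀ v ∈ R, 2 * k - 1 ≤ #{u ∈ S | A u v}) : HasBiclique A k := by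
  obtain ⟨v₀, hv₀, htop⟩ := R.exists_max_image ry hR
  exact hasBiclique_of_stabbed hA R {u ∈ S | A u v₀} (rx v₀) (ry v₀) htop
    (fun u hu => (hA u v₀).1 (mem_filter.1 hu).2) (hRdeg v₀ hv₀)
    (fun u hu => hSdeg u (mem_filter.1 hu).1)

end

/-- The bipartite intersection graph of horizontal segments
`[sa u, sb u] × {sy u}` and vertical upward rays `{rx v} × [ry v, ∞)` in the plane,
if it contains no `K_{k,k}`, is `2(k-1)`-degenerate: every nonempty induced subgraph
has a vertex of degree at most `2(k-1)`. -/
theorem stmt_5 {α β : Type*} {k : ℕ} (sa sb sy : α → ℝ) (rx ry : β → ℝ)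
    (A : α → β → Prop)
    (hA : ∀ u v, A u v ↔
      ((Set.Icc (sa u) (sb u) ×ˢ ({sy u} : Set ℝ)) ∩
        (({rx v} : Set ℝ) ×ˢ Set.Ici (ry v))).Nonempty)
    (hK : ¬ ∃ (U : Finset α) (V : Finset β), U.card = k ∧ V.card = k ∧
      ∀ u ∈ U, ∀ v ∈ V, A u v) :
    ∀ s : Finset (α ⊕ β), s.Nonempty →
      ∃ v ∈ s, {w | w ∈ s ∧ (bipGraph A).Adj v w}.ncard ≤ 2 * (k - 1) := by
  classical
  intro s hs
  by_contra! hdeg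
  have hA' (u v) : A u v ↔ sa u ≤ rx v ∧ rx v ≤ sb u ∧ ry v ≤ sy u :=
    (hA u v).trans (Icc_prod_singleton_inter_singleton_prod_Ici_nonempty_iff ..)
  have hSdeg (u) (hu : u ∈ s.toLeft) : 2 * (k - 1) < #{v ∈ s.toRight | A u v} := by
    simpa [ncard_bipGraph_adj_inl] using hdeg _ (mem_toLeft.1 hu)
  have hRdeg (v) (hv : v ∈ s.toRight) : 2 * (k - 1) < #{u ∈ s.toLeft | A u v} := by
    simpa [ncard_bipGraph_adj_inr] using hdeg _ (mem_toRight.1 hv)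
  have hR : s.toRight.Nonempty := by
    obtain ⟨u | v, hw⟩ := hs
    · exact (card_pos.1 (Nat.zero_lt_of_lt (hSdeg u (mem_toLeft.2 hw)))).mono (filter_subset _ _)
    · exact ⟨v, mem_toRight.2 hw⟩
  exact hK <| hasBiclique_of_le_degree hA' _ _ hR (fun u hu => by have := hSdeg u hu; omega)
    (fun v hv => by have := hRdeg v hv; omega)
end

section
/- Let T be a finite set and let P_1, P_2, P_3 be three strict partial orders on T such that every pair of distinct elements of T is comparable in at least one P_i. If in each P_i every element has at most k−2 successors within T, then |T| ≤ 6(k−1) − 1, i.e., |T| < 6(k−1). -/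
/-!
Double counting. Each element `x` of `T` is comparable with the other `|T| - 1` elements, each
of which is a successor or a predecessor of `x` in some `P i`. Summed over `x`, the predecessor
counts of `P i` add up to its successor counts, so `|T| (|T| - 1) ≤ 2 · 3 · |T| (k - 2)`, that is
`|T| ≤ 6(k - 2) + 1`.
-/

open Finset

section Comparability

variable {α ι : Type*} [DecidableEq α] [Fintype ι]
  (T : Finset α) (r : ι → α → α → Prop) [∀ i, DecidableRel (r i)]

lemma card_sub_one_le_sum_card_succ_add_card_pred
    (hcomp : ∀ x ∈ T, ∀ y ∈ T, x ≠ y → ∃ i, r i x y ∨ r i y x) {x : α} (hx : x ∈ T) :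
    #T - 1 ≤ ∑ i, (#{y ∈ T | r i x y} + #{y ∈ T | r i y x}) := by
  have hcover : T.erase x ⊆ univ.biUnion fun i => {y ∈ T | r i x y} ∪ {y ∈ T | r i y x} := by
    intro y hy
    obtain ⟨hyx, hyT⟩ := mem_erase.1 hy
    obtain ⟨i, hi⟩ := hcomp x hx y hyT hyx.symm
    simp only [mem_biUnion, mem_univ, true_and, mem_union, mem_filter]
    exact ⟨i, hi.imp (⟨hyT, ·⟩) (⟨hyT, ·⟩)⟩
  calc #T - 1 = #(T.erase x) := (card_erase_of_mem hx).symm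
    _ ≤ _ := card_le_card hcover
    _ ≤ ∑ i, #({y ∈ T | r i x y} ∪ {y ∈ T | r i y x}) := card_biUnion_le
    _ ≤ _ := sum_le_sum fun i _ => card_union_le _ _

lemma card_le_of_forall_comparable {d : ℕ}
    (hcomp : ∀ x ∈ T, ∀ y ∈ T, x ≠ y → ∃ i, r i x y ∨ r i y x)
    (hdeg : ∀ i, ∀ x ∈ T, #{y ∈ T | r i x y} ≤ d) :
    #T ≤ 2 * Fintype.card ι * d + 1 := by
  have hpairs : #T * (#T - 1) ≤ #T * (2 * Fintype.card ι * d) :=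
    calc #T * (#T - 1) = ∑ _x ∈ T, (#T - 1) := by rw [sum_const, smul_eq_mul]
      _ ≤ ∑ x ∈ T, ∑ i, (#{y ∈ T | r i x y} + #{y ∈ T | r i y x}) :=
          sum_le_sum fun x hx => card_sub_one_le_sum_card_succ_add_card_pred T r hcomp hx
      _ = ∑ i, 2 * ∑ x ∈ T, #{y ∈ T | r i x y} := by
          rw [sum_comm]
          refine sum_congr rfl fun i _ => ?_
          have hin_out : ∑ x ∈ T, #{y ∈ T | r i x y} = ∑ x ∈ T, #{y ∈ T | r i y x} :=
            sum_card_bipartiteAbove_eq_sum_card_bipartiteBelow (r i)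
          rw [sum_add_distrib, ← hin_out, two_mul]
      _ ≤ ∑ _i : ι, 2 * (#T * d) := by
          gcongr with i
          simpa only [smul_eq_mul] using sum_le_card_nsmul T _ d (hdeg i)
      _ = #T * (2 * Fintype.card ι * d) := by rw [sum_const, card_univ, smul_eq_mul]; ring
  rcases T.eq_empty_or_nonempty with rfl | hT
  · simp
  · have := Nat.le_of_mul_le_mul_left hpairs hT.card_pos
    omega

end Comparability

theorem stmt_9_general {α : Type*} {k : ℕ} (hk : 2 ≤ k) (T : Finset α)
    (P : Fin 3 → α → α → Prop)
    (hcomp : ∀ x ∈ T, ∀ y ∈ T, x ≠ y → ∃ i, P i x y ∨ P i y x)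
    (hsucc : ∀ i, ∀ x ∈ T, {y | y ∈ T ∧ P i x y}.ncard ≤ k - 2) :
    T.card < 6 * (k - 1) := by
  classical
  have hdeg : ∀ i, ∀ x ∈ T, #{y ∈ T | P i x y} ≤ k - 2 := fun i x hx => by
    simpa only [← Set.ncard_coe_finset, coe_filter] using hsucc i x hx
  have hcard := card_le_of_forall_comparable T P hcomp hdeg
  rw [Fintype.card_fin] at hcard
  omega

/-- Let `T` be a finite set and `P 0, P 1, P 2` three strict partial orders (irreflexive
and transitive relations) such that every pair of distinct elements of `T` is comparable
in at least one of them. If in each `P i` every element of `T` has at most `k - 2`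
successors within `T`, then `|T| < 6(k-1)`. -/
theorem stmt_9 {α : Type*} {k : ℕ} (hk : 2 ≤ k) (T : Finset α)
    (P : Fin 3 → α → α → Prop)
    (hirr : ∀ i x, ¬ P i x x)
    (htrans : ∀ i x y z, P i x y → P i y z → P i x z)
    (hcomp : ∀ x ∈ T, ∀ y ∈ T, x ≠ y → ∃ i, P i x y ∨ P i y x)
    (hsucc : ∀ i, ∀ x ∈ T, {y | y ∈ T ∧ P i x y}.ncard ≤ k - 2) :
    T.card < 6 * (k - 1) :=
  stmt_9_general hk T P hcomp hsucc
end

section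
/- Let G = (U ∪ V, E) be a bipartite graph with |U| = m, |V| = n, admitting a representation where each u ∈ U is a horizontal segment and each v ∈ V is a bottomless rectangle in ℝ², with u ~ v iff the segment of u is contained in the rectangle of v. If G contains no K_{k,k}, then |E| ≤ (3m + 6n)(k−1). -/
/-!
Encode segment `u` as the point `Q u = (sa u, -sb u, -sy u)` and rectangle `v` as
`P v = (ra v, -rb v, -rc v)` in `ℝ³`; then `u ~ v` iff `P v ≤ Q u` coordinatewise.
Call an edge `uv` deep if for every coordinate `i` at least `k` neighbours `v'` of `u` have
`P v' i ≤ P v i`. In each coordinate at most `k - 1` neighbours of `u` fail this, so `u` has at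
most `3(k - 1)` shallow edges. Fix `v` and let `S` be its deep neighbours. For `x ∈ S` and a
coordinate `i`, every `y` adjacent to `v` with `Q x j ≤ Q y j` for all `j ≠ i` is adjacent to
the `k` neighbours `v'` of `x` with `P v' i ≤ P v i`, so there are at most `k - 1` such `y`.
Two of the three coordinates of `Q x` and `Q y` are ordered the same way, so every pair of `S`
is charged to one of its members, and each member carries at most `3(k - 1)` charges; hence
`|S|² ≤ 2 · 3(k - 1) |S|`.
-/

open Finset

section Biclique

variable {ι κ : Type*}

def BicliqueFree (A : ι → κ → Prop) (k : ℕ) : Prop :=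
  ¬ ∃ (U : Finset ι) (V : Finset κ), #U = k ∧ #V = k ∧ ∀ u ∈ U, ∀ v ∈ V, A u v

theorem BicliqueFree.card_le {A : ι → κ → Prop} {k : ℕ} (hA : BicliqueFree A k)
    {U : Finset ι} {V : Finset κ} (hV : k ≤ #V) (hUV : ∀ u ∈ U, ∀ v ∈ V, A u v) :
    #U ≤ k - 1 := by
  by_contra! hU
  obtain ⟨U', hU'U, hU'⟩ := exists_subset_card_eq (show k ≤ #U by omega)
  obtain ⟨V', hV'V, hV'⟩ := exists_subset_card_eq hV
  exact hA ⟨U', V', hU', hV', fun u hu v hv => hUV u (hU'U hu) v (hV'V hv)⟩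

end Biclique

theorem card_filter_card_filter_le_lt_le {α β : Type*} [LinearOrder β] (s : Finset α)
    (f : α → β) (k : ℕ) : #{x ∈ s | #{y ∈ s | f y ≤ f x} < k} ≤ k - 1 := by
  rcases eq_empty_or_nonempty {x ∈ s | #{y ∈ s | f y ≤ f x} < k} with h | h
  · simp [h]
  obtain ⟨x₀, hx₀, hmax⟩ := exists_max_image _ f h
  have hsub : {x ∈ s | #{y ∈ s | f y ≤ f x} < k} ⊆ {y ∈ s | f y ≤ f x₀} :=
    fun y hy => mem_filter.2 ⟨(mem_filter.1 hy).1, hmax y hy⟩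
  have := card_le_card hsub
  have := (mem_filter.1 hx₀).2
  omega

theorem card_le_two_mul_of_total {α : Type*} (s : Finset α) (R : α → α → Prop) [DecidableRel R]
    (d : ℕ) (htotal : ∀ x ∈ s, ∀ y ∈ s, R x y ∨ R y x) (hR : ∀ x ∈ s, #{y ∈ s | R x y} ≤ d) :
    #s ≤ 2 * d := by
  have hcover : ∀ x ∈ s, #s ≤ #{y ∈ s | R x y} + #{y ∈ s | R y x} := by
    intro x hx
    rw [← card_filter_add_card_filter_not (s := s) (R x)]
    gcongr with y hy
    exact (htotal x hx y hy).resolve_left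
  have hsum : #s * #s ≤ #s * (2 * d) :=
    calc #s * #s = ∑ _x ∈ s, #s := by rw [sum_const, smul_eq_mul]
      _ ≤ ∑ x ∈ s, (#{y ∈ s | R x y} + #{y ∈ s | R y x}) := sum_le_sum hcover
      _ = 2 * ∑ x ∈ s, #{y ∈ s | R x y} := by
        rw [sum_add_distrib, two_mul]
        congr 1
        simp only [card_filter]
        exact sum_comm
      _ ≤ #s * (2 * d) := by
        have := sum_le_card_nsmul s _ d hR
        rw [smul_eq_mul] at this
        linarith
  rcases Nat.eq_zero_or_pos #s with h | h
  · omega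
  · exact Nat.le_of_mul_le_mul_left hsum h

theorem exists_forall_ne_le_or_forall_ne_ge {α : Type*} [LinearOrder α] (a b : Fin 3 → α) :
    ∃ i, (∀ j ≠ i, a j ≤ b j) ∨ (∀ j ≠ i, b j ≤ a j) := by
  rcases le_total (a 0) (b 0) with h0 | h0 <;> rcases le_total (a 1) (b 1) with h1 | h1 <;>
    rcases le_total (a 2) (b 2) with h2 | h2 <;>
    simp [Fin.exists_fin_succ, Fin.forall_fin_succ, *]

theorem card_filter_prod_eq_sum_fst {ι κ : Type*} [Fintype ι] [Fintype κ] (p : ι → κ → Prop)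
    [∀ u, DecidablePred (p u)] : #{q : ι × κ | p q.1 q.2} = ∑ u, #{v | p u v} := by
  simp only [card_filter, Fintype.sum_prod_type]

theorem card_filter_prod_eq_sum_snd {ι κ : Type*} [Fintype ι] [Fintype κ] (p : ι → κ → Prop)
    [∀ u, DecidablePred (p u)] [∀ v, DecidablePred (p · v)] :
    #{q : ι × κ | p q.1 q.2} = ∑ v, #{u | p u v} := by
  simp only [card_filter, Fintype.sum_prod_type]
  exact sum_comm

namespace Dominance

open scoped Classical

variable {α ι κ : Type*} [LinearOrder α] [Fintype κ]
  (Q : ι → Fin 3 → α) (P : κ → Fin 3 → α) (k : ℕ)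

noncomputable def neighborFinset (u : ι) : Finset κ := {v | P v ≤ Q u}

def IsDeep (u : ι) (v : κ) : Prop := ∀ i, k ≤ #{v' ∈ neighborFinset Q P u | P v' i ≤ P v i}

theorem card_not_deep_le (u : ι) : #{v | P v ≤ Q u ∧ ¬ IsDeep Q P k u v} ≤ 3 * (k - 1) := by
  set N := neighborFinset Q P u
  have hsub : {v ∈ N | ¬ IsDeep Q P k u v} ⊆
      univ.biUnion fun i : Fin 3 => {v ∈ N | #{v' ∈ N | P v' i ≤ P v i} < k} := by
    intro v hv
    obtain ⟨hvN, hv⟩ := mem_filter.1 hv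
    obtain ⟨i, hi⟩ := not_forall.1 hv
    exact mem_biUnion.2 ⟨i, mem_univ _, mem_filter.2 ⟨hvN, not_le.1 hi⟩⟩
  calc #{v | P v ≤ Q u ∧ ¬ IsDeep Q P k u v} = #{v ∈ N | ¬ IsDeep Q P k u v} := by
        simp only [N, neighborFinset, filter_filter]
    _ ≤ ∑ _i : Fin 3, (k - 1) := (card_le_card hsub).trans <|
      card_biUnion_le.trans (sum_le_sum fun i _ => card_filter_card_filter_le_lt_le _ _ k)
    _ = 3 * (k - 1) := by simp

variable {Q P k}

theorem card_bucket_le [Fintype ι] (hK : BicliqueFree (fun u v => P v ≤ Q u) k) {x : ι} {v : κ}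
    (hx : IsDeep Q P k x v) (i : Fin 3) :
    #{y | P v ≤ Q y ∧ ∀ j ≠ i, Q x j ≤ Q y j} ≤ k - 1 := by
  refine hK.card_le (hx i) fun y hy v' hv' j => ?_
  obtain ⟨hvy, hxy⟩ := (mem_filter.1 hy).2
  obtain ⟨hv'N, hv'v⟩ := mem_filter.1 hv'
  have hv'x : P v' ≤ Q x := (mem_filter.1 hv'N).2
  rcases eq_or_ne j i with rfl | hj
  · exact hv'v.trans (hvy j)
  · exact (hv'x j).trans (hxy j hj)

theorem card_deep_le [Fintype ι] (hK : BicliqueFree (fun u v => P v ≤ Q u) k) (v : κ) :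
    #{u | P v ≤ Q u ∧ IsDeep Q P k u v} ≤ 6 * (k - 1) := by
  set S : Finset ι := {u | P v ≤ Q u ∧ IsDeep Q P k u v}
  let R : ι → ι → Prop := fun x y => ∃ i, ∀ j ≠ i, Q x j ≤ Q y j
  have htotal : ∀ x ∈ S, ∀ y ∈ S, R x y ∨ R y x := by
    intro x _ y _
    obtain ⟨i, hi | hi⟩ := exists_forall_ne_le_or_forall_ne_ge (Q x) (Q y)
    exacts [Or.inl ⟨i, hi⟩, Or.inr ⟨i, hi⟩]
  have hcharge : ∀ x ∈ S, #{y ∈ S | R x y} ≤ 3 * (k - 1) := by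
    intro x hx
    have hsub : {y ∈ S | R x y} ⊆
        univ.biUnion fun i : Fin 3 => {y | P v ≤ Q y ∧ ∀ j ≠ i, Q x j ≤ Q y j} := by
      intro y hy
      obtain ⟨hyS, i, hi⟩ := mem_filter.1 hy
      exact mem_biUnion.2 ⟨i, mem_univ _, mem_filter.2 ⟨mem_univ _, (mem_filter.1 hyS).2.1, hi⟩⟩
    calc #{y ∈ S | R x y} ≤ ∑ _i : Fin 3, (k - 1) := (card_le_card hsub).trans <|
          card_biUnion_le.trans (sum_le_sum fun i _ => card_bucket_le hK (mem_filter.1 hx).2.2 i)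
      _ = 3 * (k - 1) := by simp
  have := card_le_two_mul_of_total S R _ htotal hcharge
  omega

theorem card_edges_le [Fintype ι] (hK : BicliqueFree (fun u v => P v ≤ Q u) k) :
    #{q : ι × κ | P q.2 ≤ Q q.1} ≤ (3 * Fintype.card ι + 6 * Fintype.card κ) * (k - 1) := by
  rw [← card_filter_add_card_filter_not (fun q : ι × κ => IsDeep Q P k q.1 q.2), filter_filter,
    filter_filter, card_filter_prod_eq_sum_snd fun u v => P v ≤ Q u ∧ IsDeep Q P k u v,
    card_filter_prod_eq_sum_fst fun u v => P v ≤ Q u ∧ ¬ IsDeep Q P k u v]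
  calc _ ≤ ∑ _v : κ, 6 * (k - 1) + ∑ _u : ι, 3 * (k - 1) :=
        add_le_add (sum_le_sum fun v _ => card_deep_le hK v)
          (sum_le_sum fun u _ => card_not_deep_le Q P k u)
    _ = _ := by simp only [sum_const, card_univ, smul_eq_mul]; ring

end Dominance

theorem Set.Icc_prod_singleton_subset_Icc_prod_Iic_iff {α : Type*} [Preorder α] {a b y a' b' c : α}
    (hab : a ≤ b) :
    Set.Icc a b ×ˢ {y} ⊆ Set.Icc a' b' ×ˢ Set.Iic c ↔ a' ≤ a ∧ b ≤ b' ∧ y ≤ c := by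
  rw [Set.prod_subset_prod_iff' ((Set.nonempty_Icc.2 hab).prod (Set.singleton_nonempty y)),
    Set.Icc_subset_Icc_iff hab, Set.singleton_subset_iff, Set.mem_Iic, and_assoc]

/-- Let `G` be a bipartite graph where each `u : Fin m` is represented by a horizontal
segment `[sa u, sb u] × {sy u}` and each `v : Fin n` by a bottomless rectangle
`[ra v, rb v] × (-∞, rc v]`, with `u ~ v` iff the segment is contained in the rectangle.
If `G` contains no `K_{k,k}`, then `G` has at most `(3m + 6n)(k-1)` edges. -/
theorem stmt_10 {m n k : ℕ} (sa sb sy : Fin m → ℝ) (ra rb rc : Fin n → ℝ)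
    (hseg : ∀ u, sa u ≤ sb u)
    (A : Fin m → Fin n → Prop)
    (hA : ∀ u v, A u v ↔
      (Set.Icc (sa u) (sb u) ×ˢ ({sy u} : Set ℝ)) ⊆
        (Set.Icc (ra v) (rb v) ×ˢ Set.Iic (rc v)))
    (hK : ¬ ∃ (U : Finset (Fin m)) (V : Finset (Fin n)), U.card = k ∧ V.card = k ∧
      ∀ u ∈ U, ∀ v ∈ V, A u v) :
    {q : Fin m × Fin n | A q.1 q.2}.ncard ≤ (3 * m + 6 * n) * (k - 1) := by
  classical
  have hdom : A = fun u v => ![ra v, -rb v, -rc v] ≤ ![sa u, -sb u, -sy u] := by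
    ext u v
    rw [hA, Set.Icc_prod_singleton_subset_Icc_prod_Iic_iff (hseg u)]
    simp [Pi.le_def, Fin.forall_fin_succ]
  subst hdom
  rw [← coe_filter_univ, Set.ncard_coe_finset]
  simpa using Dominance.card_edges_le hK
end

section
/- A bipartite graph G is a segment–bottomless-rectangle containment graph (horizontal segments contained in bottomless rectangles in ℝ²) if and only if G is the intersection of an interval containment bigraph and a point–ray intersection bigraph, i.e., G = G_x ∩ G_y on the same vertex set where G_x is an interval containment bigraph and G_y is a chain graph. -/
/-
A horizontal segment `[a, b] × {y}` lies in a bottomless rectangle `[c, d] × (-∞, e]` exactly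
when `[a, b] ⊆ [c, d]` and `y ≤ e`. The first condition is interval containment; the second
becomes the point–ray condition `-e ≤ -y` after reflecting the vertical axis.
-/

lemma Set.prod_singleton_subset_prod_iff {X Y : Type*} {s s' : Set X} {t : Set Y} {y : Y}
    (hs : s.Nonempty) : s ×ˢ {y} ⊆ s' ×ˢ t ↔ s ⊆ s' ∧ y ∈ t := by
  simp [Set.prod_subset_prod_iff, hs.ne_empty]

/-- A bipartite graph (given as a relation `E` between parts `α` and `β`) is a
segment–bottomless-rectangle containment graph if and only if it is the intersection
of an interval containment bigraph and a point–ray (chain) bigraph on the same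
vertex set. -/
theorem stmt_11 {α β : Type*} (E : α → β → Prop) :
    (∃ (sa sb sy : α → ℝ) (ra rb rc : β → ℝ),
      (∀ u, sa u ≤ sb u) ∧
      ∀ u v, E u v ↔
        (Set.Icc (sa u) (sb u) ×ˢ ({sy u} : Set ℝ)) ⊆
          (Set.Icc (ra v) (rb v) ×ˢ Set.Iic (rc v)))
    ↔
    (∃ EX EY : α → β → Prop,
      (∀ u v, E u v ↔ EX u v ∧ EY u v) ∧
      (∃ (ia ib : α → ℝ) (ja jb : β → ℝ),
        (∀ u, ia u ≤ ib u) ∧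
        ∀ u v, EX u v ↔ Set.Icc (ia u) (ib u) ⊆ Set.Icc (ja v) (jb v)) ∧
      (∃ (p : α → ℝ) (r : β → ℝ), ∀ u v, EY u v ↔ r v ≤ p u)) := by
  have segment_subset_iff {a b y c d e : ℝ} (hab : a ≤ b) :
      Set.Icc a b ×ˢ {y} ⊆ Set.Icc c d ×ˢ Set.Iic e ↔ Set.Icc a b ⊆ Set.Icc c d ∧ -e ≤ -y := by
    rw [Set.prod_singleton_subset_prod_iff (Set.nonempty_Icc.2 hab), Set.mem_Iic, neg_le_neg_iff]
  constructor
  · rintro ⟨sa, sb, sy, ra, rb, rc, hab, hE⟩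
    refine ⟨fun u v => Set.Icc (sa u) (sb u) ⊆ Set.Icc (ra v) (rb v), fun u v => -rc v ≤ -sy u,
      fun u v => (hE u v).trans (segment_subset_iff (hab u)),
      ⟨sa, sb, ra, rb, hab, fun _ _ => Iff.rfl⟩, ⟨fun u => -sy u, fun v => -rc v, fun _ _ => Iff.rfl⟩⟩
  · rintro ⟨EX, EY, hE, ⟨ia, ib, ja, jb, hab, hX⟩, ⟨p, r, hY⟩⟩
    refine ⟨ia, ib, fun u => -p u, ja, jb, fun v => -r v, hab, fun u v => ?_⟩
    rw [hE, hX, hY, segment_subset_iff (hab u), neg_neg, neg_neg]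
end

section
/- Every point–rectangle intersection bigraph is in CONV², i.e., it is the intersection of two convex bipartite graphs on the same vertex set. -/
/-!
The rectangle graph is the intersection of the two graphs "the `x`-coordinate of the point lies
in the `x`-side of the rectangle" and the same for `y`. Each of them is convex over the points:
list the points by that coordinate, breaking ties arbitrarily, and the points hit by an interval
form a contiguous block.
-/

/-- A bipartite graph `E : α → β → Prop` is convex over its second part if there is a
linear ordering of `β` (an injection into `ℝ`) in which every `u : α` has a contiguous
neighborhood. -/
def ConvexOver {α β : Type*} (E : α → β → Prop) : Prop :=
  ∃ f : β → ℝ, Function.Injective f ∧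
    ∀ u v₁ v₂ v₃, f v₁ ≤ f v₂ → f v₂ ≤ f v₃ → E u v₁ → E u v₃ → E u v₂

/-- A convex bipartite graph: convex over one of its two parts. -/
def IsConvexBigraph {α β : Type*} (E : α → β → Prop) : Prop :=
  ConvexOver E ∨ ConvexOver (Function.swap E)

theorem exists_injective_le_imp_le {α γ : Type*} [Finite α] [LinearOrder γ] (g : α → γ) :
    ∃ f : α → ℝ, Function.Injective f ∧ ∀ a b, f a ≤ f b → g a ≤ g b := by
  have := Fintype.ofFinite α
  let K : α → Lex (γ × Fin (Fintype.card α)) := fun a => toLex (g a, Fintype.equivFin α a)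
  have hK : Function.Injective K := fun a b h =>
    (Fintype.equivFin α).injective (congrArg Prod.snd (toLex.injective h))
  let _ : LinearOrder α := LinearOrder.lift' K hK
  let σ := Fintype.orderIsoFinOfCardEq α rfl
  refine ⟨fun a => (σ.symm a : ℝ), fun a b h => σ.symm.injective (Fin.ext (Nat.cast_injective h)),
    fun a b h => ?_⟩
  have hKab : K a ≤ K b := σ.symm.le_iff_le.mp (Nat.cast_le.mp h)
  exact Prod.Lex.monotone_fst_ofLex hKab

theorem convexOver_swap_mem_Icc {α β γ : Type*} [Finite α] [LinearOrder γ]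
    (p : α → γ) (l r : β → γ) :
    ConvexOver (Function.swap fun a b => p a ∈ Set.Icc (l b) (r b)) := by
  obtain ⟨f, hf, hle⟩ := exists_injective_le_imp_le p
  exact ⟨f, hf, fun _ a₁ a₂ a₃ h₁₂ h₂₃ ⟨hl, _⟩ ⟨_, hr⟩ =>
    ⟨hl.trans (hle a₁ a₂ h₁₂), (hle a₂ a₃ h₂₃).trans hr⟩⟩

theorem stmt_15_general {α β : Type*} [Fintype α] (E : α → β → Prop)
    (P : α → ℝ × ℝ) (xl xr yl yr : β → ℝ)
    (hE : ∀ a b, E a b ↔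
      (P a).1 ∈ Set.Icc (xl b) (xr b) ∧ (P a).2 ∈ Set.Icc (yl b) (yr b)) :
    ∃ E₁ E₂ : α → β → Prop, IsConvexBigraph E₁ ∧ IsConvexBigraph E₂ ∧
      ∀ a b, E a b ↔ E₁ a b ∧ E₂ a b :=
  ⟨_, _, .inr (convexOver_swap_mem_Icc (fun a => (P a).1) xl xr),
    .inr (convexOver_swap_mem_Icc (fun a => (P a).2) yl yr), hE⟩

/-- Every point–rectangle intersection bigraph is in `CONV²`: it is the intersection of
two convex bipartite graphs on the same vertex set. -/
theorem stmt_15 {α β : Type*} [Fintype α] [Fintype β] (E : α → β → Prop)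
    (P : α → ℝ × ℝ) (xl xr yl yr : β → ℝ)
    (hE : ∀ a b, E a b ↔
      (P a).1 ∈ Set.Icc (xl b) (xr b) ∧ (P a).2 ∈ Set.Icc (yl b) (yr b)) :
    ∃ E₁ E₂ : α → β → Prop, IsConvexBigraph E₁ ∧ IsConvexBigraph E₂ ∧
      ∀ a b, E a b ↔ E₁ a b ∧ E₂ a b :=
  stmt_15_general E P xl xr yl yr hE
end

section
/- Every grid intersection graph (bipartite intersection graph of horizontal and vertical segments in the plane) is the intersection of two convex bipartite graphs on the same vertex set. -/
open Set

theorem exists_injective_le_imp_le_s16 {β : Type*} [Countable β] (x : β → ℝ) :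
    ∃ f : β → ℝ, Function.Injective f ∧ ∀ v w, f v ≤ f w → x v ≤ x w := by
  obtain ⟨n, hn⟩ := Countable.exists_injective_nat β
  let key : β → ℝ ×ₗ ℕ := fun v => toLex (x v, n v)
  have : Countable (range key) := (countable_range key).to_subtype
  obtain ⟨e⟩ := Order.embedding_from_countable_to_dense (α := range key) (β := ℝ)
  refine ⟨fun v => e ⟨key v, v, rfl⟩, fun v w hvw => hn ?_, fun v w hvw => ?_⟩
  · exact congrArg (fun p => (ofLex p).2) (congrArg Subtype.val (e.injective hvw))
  · exact Prod.Lex.monotone_fst_ofLex (e.le_iff_le.mp hvw)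

theorem convexOver_of_ordConnected {α β : Type*} [Countable β] (x : β → ℝ) (S : α → Set ℝ)
    (hS : ∀ u, (S u).OrdConnected) : ConvexOver fun u v => x v ∈ S u := by
  obtain ⟨f, hf, hmono⟩ := exists_injective_le_imp_le_s16 x
  exact ⟨f, hf, fun u _ _ _ h₁₂ h₂₃ h₁ h₃ =>
    (hS u).out h₁ h₃ ⟨hmono _ _ h₁₂, hmono _ _ h₂₃⟩⟩

theorem prod_singleton_inter_singleton_prod_nonempty_iff {X Y : Type*} {s : Set X} {t : Set Y}
    {x : X} {y : Y} :
    ((s ×ˢ {y}) ∩ ({x} ×ˢ t)).Nonempty ↔ x ∈ s ∧ y ∈ t := by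
  rw [prod_inter_prod, prod_nonempty_iff, inter_singleton_nonempty, singleton_inter_nonempty]

/-- Every grid intersection graph (bipartite intersection graph of horizontal segments
and vertical segments in the plane) is the intersection of two convex bipartite graphs
on the same vertex set. -/
theorem stmt_16 {α β : Type*} [Fintype α] [Fintype β] (E : α → β → Prop)
    (sa sb sy : α → ℝ) (vx va vb : β → ℝ)
    (hE : ∀ a b, E a b ↔
      ((Set.Icc (sa a) (sb a) ×ˢ ({sy a} : Set ℝ)) ∩
        (({vx b} : Set ℝ) ×ˢ Set.Icc (va b) (vb b))).Nonempty) :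
    ∃ E₁ E₂ : α → β → Prop, IsConvexBigraph E₁ ∧ IsConvexBigraph E₂ ∧
      ∀ a b, E a b ↔ E₁ a b ∧ E₂ a b := by
  refine ⟨fun a b => vx b ∈ Icc (sa a) (sb a), fun a b => sy a ∈ Icc (va b) (vb b),
    .inl (convexOver_of_ordConnected vx _ fun _ => ordConnected_Icc),
    .inr (convexOver_of_ordConnected sy _ fun _ => ordConnected_Icc), fun a b => ?_⟩
  exact (hE a b).trans prod_singleton_inter_singleton_prod_nonempty_iff
end
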